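/- Let A₀ ∈ gl(3,ℂ) be the matrix whose only nonzero row is the third row (1, i, 0), i.e. A₀ = e₃ ⊗ (e₁ + i e₂)ᵀ. Consider the left action of G = U(1) × SO(3) × SO(3) on gl(3,ℂ) given by (e^{iφ}, R₁, R₂) · A = e^{iφ} R₁ A R₂⁻¹. Then the stabilizer of A₀ in G equals the set H = {(e^{iφ}, ρ(α)J₊, ρ(φ)J̃₊) : φ, α ∈ ℝ} ∪ {(e^{iφ}, ρ(α)J₋, ρ(φ)J̃₋) : φ, α ∈ ℝ}. -/

import Mathlib

open Matrix

noncomputable section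

abbrev M3R : Type := Matrix (Fin 3) (Fin 3) ℝ
abbrev M3C : Type := Matrix (Fin 3) (Fin 3) ℂ

/-- `R ∈ SO(3)`. -/
def isSO3 (R : M3R) : Prop := R * Rᵀ = 1 ∧ R.det = 1

/-- View a real matrix as a complex matrix. -/
def toC (R : M3R) : M3C := R.map (fun x => (x : ℂ))

/-- `ρ(θ) = exp(θ ê₃)`, the rotation by angle `θ` about the third axis. -/
def rot3 (θ : ℝ) : M3R :=
  !![Real.cos θ, -Real.sin θ, 0; Real.sin θ, Real.cos θ, 0; 0, 0, 1]

/-- `J₋ = diag(1,-1,-1)`. -/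
def Jm : M3R := !![1, 0, 0; 0, -1, 0; 0, 0, -1]

/-- `J̃₋ = diag(-1,-1,1)`. -/
def Jtm : M3R := !![-1, 0, 0; 0, -1, 0; 0, 0, 1]

/-- `A₀ = e₃ ⊗ (e₁ + i e₂)ᵀ`. -/
def A0 : M3C := !![0, 0, 0; 0, 0, 0; 1, Complex.I, 0]

/-!
Write `A₀ = e₃ wᵀ` with `w = e₁ + i e₂`. Since `ρ(φ)ᵀ w = e^{iφ} w`, we have `A₀ ρ(φ) = e^{iφ} A₀`,
so the phase `e^{iφ}` can be absorbed into the second factor: the stabilizer condition becomes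
`R₁ A₀ = A₀ R₂'` with `R₂' = ρ(-φ) R₂`. Comparing entries, `R₁` maps `e₃` to `s e₃` and the first
two rows of `R₂'` are `s e₁ᵀ, s e₂ᵀ`. An element of `SO(3)` preserving the axis `ℝ e₃` is `ρ(α)`
(`s = 1`) or `ρ(α) J₋` (`s = -1`), and the third row of an element of `SO(3)` is the cross product
of the first two, so `R₂' = diag(s, s, 1)`, that is `1` or `J̃₋`.
-/

lemma toC_mul (A B : M3R) : toC (A * B) = toC A * toC B :=
  Matrix.map_mul (f := Complex.ofRealHom)

lemma toC_one : toC 1 = 1 :=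
  Matrix.map_one _ Complex.ofReal_zero Complex.ofReal_one

lemma inv_toC_of_mul_transpose_eq_one {R : M3R} (h : R * Rᵀ = 1) : (toC R)⁻¹ = toC Rᵀ :=
  inv_eq_right_inv (by rw [← toC_mul, h, toC_one])

lemma smul_mul_inv_toC_eq_iff {R : M3R} (hR : R * Rᵀ = 1) (c : ℂ) (X Y : M3C) :
    c • (X * (toC R)⁻¹) = Y ↔ c • X = Y * toC R := by
  have hR' : Rᵀ * R = 1 := mul_eq_one_comm.mp hR
  rw [inv_toC_of_mul_transpose_eq_one hR, ← smul_mul_assoc]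
  constructor
  · rintro rfl
    rw [mul_assoc, ← toC_mul, hR', toC_one, mul_one]
  · rintro h
    rw [h, mul_assoc, ← toC_mul, hR, toC_one, mul_one]

lemma isSO3.mul {A B : M3R} (hA : isSO3 A) (hB : isSO3 B) : isSO3 (A * B) :=
  ⟨by rw [transpose_mul, mul_assoc, ← mul_assoc B, hB.1, one_mul, hA.1],
    by rw [det_mul, hA.2, hB.2, one_mul]⟩

lemma rot3_zero : rot3 0 = 1 := by
  simp [rot3, one_fin_three]

lemma rot3_add (a b : ℝ) : rot3 (a + b) = rot3 a * rot3 b := by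
  ext i j
  fin_cases i <;> fin_cases j <;>
    simp [rot3, mul_apply, Fin.sum_univ_three, Real.cos_add, Real.sin_add] <;> ring

lemma rot3_mul_rot3_neg_mul (θ : ℝ) (A : M3R) : rot3 θ * (rot3 (-θ) * A) = A := by
  rw [← mul_assoc, ← rot3_add, add_neg_cancel, rot3_zero, one_mul]

lemma rot3_neg_mul_eq_iff {θ : ℝ} {A B : M3R} : rot3 (-θ) * A = B ↔ A = rot3 θ * B := by
  constructor
  · rintro rfl
    exact (rot3_mul_rot3_neg_mul θ A).symm
  · rintro rfl
    rw [← mul_assoc, ← rot3_add, neg_add_cancel, rot3_zero, one_mul]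

lemma transpose_rot3 (θ : ℝ) : (rot3 θ)ᵀ = rot3 (-θ) := by
  ext i j; fin_cases i <;> fin_cases j <;> simp [rot3]

lemma rot3_pi : rot3 Real.pi = Jtm := by
  simp [rot3, Jtm]

lemma isSO3_rot3 (θ : ℝ) : isSO3 (rot3 θ) := by
  refine ⟨by rw [transpose_rot3, ← rot3_add, add_neg_cancel, rot3_zero], ?_⟩
  simp [rot3, det_fin_three, ← sq, Real.cos_sq_add_sin_sq]

lemma isSO3_Jm : isSO3 Jm := by
  refine ⟨?_, by simp [Jm, det_fin_three]⟩
  ext i j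
  fin_cases i <;> fin_cases j <;> simp [Jm, mul_apply, Fin.sum_univ_three]

lemma isSO3_Jtm : isSO3 Jtm :=
  rot3_pi ▸ isSO3_rot3 Real.pi

lemma rot3_mul_Jm (α : ℝ) :
    rot3 α * Jm = !![Real.cos α, Real.sin α, 0; Real.sin α, -Real.cos α, 0; 0, 0, -1] := by
  simp [rot3, Jm]

lemma Matrix.transpose_eq_adjugate {n R : Type*} [Fintype n] [DecidableEq n] [CommRing R]
    {A : Matrix n n R} (hA : A * Aᵀ = 1) (hdet : A.det = 1) : Aᵀ = A.adjugate := by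
  rw [← one_mul Aᵀ, ← one_smul R (1 : Matrix n n R), ← hdet, ← adjugate_mul, mul_assoc, hA,
    mul_one]

lemma isSO3.row_two_eq_cross {R : M3R} (hR : isSO3 R) : R 2 = R 0 ⨯₃ R 1 := by
  have h := congrFun₂ (Matrix.transpose_eq_adjugate hR.1 hR.2)
  ext j
  fin_cases j
  · simpa [adjugate_fin_three, cross_apply] using h 0 2
  · simpa [adjugate_fin_three, cross_apply, neg_add_eq_sub] using h 1 2
  · simpa [adjugate_fin_three, cross_apply] using h 2 2

lemma Real.exists_cos_eq_sin_eq {a b : ℝ} (h : a ^ 2 + b ^ 2 = 1) :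
    ∃ θ, Real.cos θ = a ∧ Real.sin θ = b := by
  have hz : ‖(⟨a, b⟩ : ℂ)‖ = 1 := by
    rw [← pow_eq_one_iff_of_nonneg (norm_nonneg _) two_ne_zero, Complex.sq_norm,
      Complex.normSq_mk, ← h, sq, sq]
  obtain ⟨θ, hθ⟩ := (Complex.norm_eq_one_iff _).mp hz
  exact ⟨θ, by simpa using congrArg Complex.re hθ, by simpa using congrArg Complex.im hθ⟩

lemma isSO3.exists_eq_rot3_or_eq_rot3_mul_Jm {R : M3R} (hR : isSO3 R) (h02 : R 0 2 = 0)
    (h12 : R 1 2 = 0) : ∃ α, R = rot3 α ∨ R = rot3 α * Jm := by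
  have hrow (i j : Fin 3) : R i 0 * R j 0 + R i 1 * R j 1 + R i 2 * R j 2 = (1 : M3R) i j := by
    rw [← hR.1]; simp [mul_apply, Fin.sum_univ_three]
  have h00 := hrow 0 0
  have h01 := hrow 0 1
  have h11 := hrow 1 1
  simp only [h02, h12, mul_zero, add_zero, one_apply_eq, ne_eq, zero_ne_one, not_false_eq_true,
    one_apply_ne] at h00 h01 h11
  set δ := R 0 0 * R 1 1 - R 0 1 * R 1 0 with hδ_def
  have h2 : R 2 = ![0, 0, δ] := by
    rw [hR.row_two_eq_cross, cross_apply, h02, h12]; simp [hδ_def]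
  have hc : R 1 0 = -δ * R 0 1 := by linear_combination (-R 1 0) * h00 + R 0 0 * h01
  have hd : R 1 1 = δ * R 0 0 := by linear_combination (-R 1 1) * h00 + R 0 1 * h01
  have hδ : δ ^ 2 = 1 := by
    linear_combination h11 - (R 1 0 - δ * R 0 1) * hc - (R 1 1 + δ * R 0 0) * hd - δ ^ 2 * h00
  have hR' : R = !![R 0 0, R 0 1, 0; -δ * R 0 1, δ * R 0 0, 0; 0, 0, δ] := by
    ext i j
    fin_cases i <;> fin_cases j <;> simp [h02, h12, hc, hd, h2]
  clear_value δ
  rcases sq_eq_one_iff.mp hδ with rfl | rfl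
  · obtain ⟨θ, hcos, hsin⟩ := Real.exists_cos_eq_sin_eq (a := R 0 0) (b := -R 0 1)
      (by linear_combination h00)
    exact ⟨θ, Or.inl (by rw [hR', rot3, hcos, hsin]; simp)⟩
  · obtain ⟨θ, hcos, hsin⟩ := Real.exists_cos_eq_sin_eq (a := R 0 0) (b := R 0 1)
      (by linear_combination h00)
    exact ⟨θ, Or.inr (by rw [hR', rot3_mul_Jm, hcos, hsin]; simp)⟩

lemma toC_rot3_mul_A0 (α : ℝ) : toC (rot3 α) * A0 = A0 := by
  ext i j; fin_cases i <;> fin_cases j <;> simp [toC, rot3, A0, mul_apply, Fin.sum_univ_three]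

lemma toC_Jm_mul_A0 : toC Jm * A0 = -A0 := by
  ext i j; fin_cases i <;> fin_cases j <;> simp [toC, Jm, A0, mul_apply, Fin.sum_univ_three]

lemma A0_mul_toC_rot3 (φ : ℝ) : A0 * toC (rot3 φ) = Complex.exp (φ * Complex.I) • A0 := by
  ext i j
  fin_cases i <;> fin_cases j <;>
    simp [toC, rot3, A0, mul_apply, Fin.sum_univ_three, Complex.exp_mul_I, ← Complex.ofReal_cos,
      ← Complex.ofReal_sin, add_mul, mul_assoc] <;> ring

lemma A0_mul_toC_Jtm : A0 * toC Jtm = -A0 := by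
  ext i j; fin_cases i <;> fin_cases j <;> simp [toC, Jtm, A0, mul_apply, Fin.sum_univ_three]

theorem toC_mul_A0_eq_A0_mul_toC_iff {R₁ R₂ : M3R} (h₁ : isSO3 R₁) (h₂ : isSO3 R₂) :
    toC R₁ * A0 = A0 * toC R₂ ↔
      ∃ α, (R₁ = rot3 α ∧ R₂ = 1) ∨ (R₁ = rot3 α * Jm ∧ R₂ = Jtm) := by
  constructor
  · intro h
    have hentry (i j : Fin 3) : (R₁ i 2 : ℂ) * A0 2 j = A0 i 0 * R₂ 0 j + A0 i 1 * R₂ 1 j := by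
      have hij := congrFun₂ h i j
      fin_cases i <;> fin_cases j <;> simp [toC, A0, mul_apply, Fin.sum_univ_three] at hij ⊢ <;>
        linear_combination hij
    have h02 : R₁ 0 2 = 0 := by simpa [A0] using hentry 0 0
    have h12 : R₁ 1 2 = 0 := by simpa [A0] using hentry 1 0
    have hrow0 : R₂ 0 = ![R₁ 2 2, 0, 0] := by
      ext j
      have hj := congrArg Complex.re (hentry 2 j)
      fin_cases j <;> simpa [A0] using hj.symm
    have hrow1 : R₂ 1 = ![0, R₁ 2 2, 0] := by
      ext j
      have hj := congrArg Complex.im (hentry 2 j)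
      fin_cases j <;> simpa [A0] using hj.symm
    have hR₂ : R₂ = !![R₁ 2 2, 0, 0; 0, R₁ 2 2, 0; 0, 0, R₁ 2 2 * R₁ 2 2] := by
      have hrow2 := h₂.row_two_eq_cross
      ext i j
      fin_cases i <;> fin_cases j <;> simp [hrow0, hrow1, hrow2, cross_apply]
    obtain ⟨α, rfl | rfl⟩ := h₁.exists_eq_rot3_or_eq_rot3_mul_Jm h02 h12
    · exact ⟨α, Or.inl ⟨rfl, by simpa [rot3, one_fin_three] using hR₂⟩⟩
    · exact ⟨α, Or.inr ⟨rfl, by simpa [rot3_mul_Jm, Jtm] using hR₂⟩⟩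
  · rintro ⟨α, ⟨rfl, rfl⟩ | ⟨rfl, rfl⟩⟩
    · rw [toC_rot3_mul_A0, toC_one, mul_one]
    · rw [toC_mul, mul_assoc, toC_Jm_mul_A0, A0_mul_toC_Jtm, mul_neg, toC_rot3_mul_A0]

lemma exp_smul_toC_mul_A0_eq_iff (φ : ℝ) (R₁ R₂ : M3R) :
    Complex.exp (φ * Complex.I) • (toC R₁ * A0) = A0 * toC R₂ ↔
      toC R₁ * A0 = A0 * toC (rot3 (-φ) * R₂) := by
  have h : A0 * toC R₂ = Complex.exp (φ * Complex.I) • (A0 * toC (rot3 (-φ) * R₂)) := by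
    rw [← smul_mul_assoc, ← A0_mul_toC_rot3, mul_assoc, ← toC_mul, rot3_mul_rot3_neg_mul]
  rw [h, smul_right_inj (Complex.exp_ne_zero _)]

theorem exp_smul_mul_inv_eq_A0_iff {φ : ℝ} {R₁ R₂ : M3R} (h₁ : isSO3 R₁) (h₂ : isSO3 R₂) :
    Complex.exp (φ * Complex.I) • (toC R₁ * A0 * (toC R₂)⁻¹) = A0 ↔
      ∃ α, (R₁ = rot3 α ∧ R₂ = rot3 φ) ∨ (R₁ = rot3 α * Jm ∧ R₂ = rot3 φ * Jtm) := by
  rw [smul_mul_inv_toC_eq_iff h₂.1, exp_smul_toC_mul_A0_eq_iff,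
    toC_mul_A0_eq_A0_mul_toC_iff h₁ ((isSO3_rot3 _).mul h₂)]
  simp only [rot3_neg_mul_eq_iff, mul_one]

/-- The stabilizer of `A₀` in `G = U(1) × SO(3) × SO(3)` (acting by
`(e^{iφ}, R₁, R₂) · A = e^{iφ} R₁ A R₂⁻¹`) equals
`H = {(e^{iφ}, ρ(α)J₊, ρ(φ)J̃₊)} ∪ {(e^{iφ}, ρ(α)J₋, ρ(φ)J̃₋)}` (with `J₊ = J̃₊ = 1`). -/
theorem stabilizer_A0_first_regime :
    {g : ℂ × M3R × M3R |
        (‖g.1‖ = 1 ∧ isSO3 g.2.1 ∧ isSO3 g.2.2) ∧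
        g.1 • (toC g.2.1 * A0 * (toC g.2.2)⁻¹) = A0} =
    {g : ℂ × M3R × M3R | ∃ φ α : ℝ,
        g = (Complex.exp (φ * Complex.I), rot3 α, rot3 φ) ∨
        g = (Complex.exp (φ * Complex.I), rot3 α * Jm, rot3 φ * Jtm)} := by
  ext ⟨c, R₁, R₂⟩
  simp only [Set.mem_ofPred_eq, Prod.mk.injEq]
  constructor
  · rintro ⟨⟨hc, h₁, h₂⟩, h⟩
    obtain ⟨φ, rfl⟩ := (Complex.norm_eq_one_iff c).mp hc
    obtain ⟨α, h' | h'⟩ := (exp_smul_mul_inv_eq_A0_iff h₁ h₂).mp h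
    exacts [⟨φ, α, Or.inl ⟨rfl, h'⟩⟩, ⟨φ, α, Or.inr ⟨rfl, h'⟩⟩]
  · rintro ⟨φ, α, ⟨rfl, rfl, rfl⟩ | ⟨rfl, rfl, rfl⟩⟩
    · exact ⟨⟨Complex.norm_exp_ofReal_mul_I φ, isSO3_rot3 α, isSO3_rot3 φ⟩,
        (exp_smul_mul_inv_eq_A0_iff (isSO3_rot3 α) (isSO3_rot3 φ)).mpr ⟨α, Or.inl ⟨rfl, rfl⟩⟩⟩
    · have h₁ := (isSO3_rot3 α).mul isSO3_Jm
      have h₂ := (isSO3_rot3 φ).mul isSO3_Jtm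
      exact ⟨⟨Complex.norm_exp_ofReal_mul_I φ, h₁, h₂⟩,
        (exp_smul_mul_inv_eq_A0_iff h₁ h₂).mpr ⟨α, Or.inr ⟨rfl, rfl⟩⟩⟩
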